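/- Suppose r is the nonzero Gauss remainder of nonzero a, b ∈ ℤ[i], φ(r) ≥ φ(b) = n, and 2^{v₂(r)} divides w_{n-1}. Then either ℓ∞(r) = w_{n-1} - 2^{v₂(r)} or ℓ₁(r) ≥ wₙ - 2^{v₂(r)+1}; in both cases ℓ∞(r) ≥ wₙ - w_{n-1} and ℓ₁(r) ≥ w_{n-1} - 2^{v₂(r)}; and if ℓ∞(r) ≠ w_{n-1} - 2^{v₂(r)} then min(|Re r|, |Im r|) ≥ wₙ - w_{n-1}. -/

import Mathlib

open GaussianInt

noncomputable section

/-- The sequence w: w_{2k} = 3·2^k, w_{2k+1} = 4·2^k. -/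
def w (n : ℕ) : ℤ := if n % 2 = 0 then 3 * 2 ^ (n / 2) else 4 * 2 ^ (n / 2)

/-- 2-adic valuation of gcd(Re z, Im z). -/
def v2 (z : GaussianInt) : ℕ := padicValNat 2 (Int.gcd z.re z.im)

/-- ℓ₁ norm. -/
def l1 (z : GaussianInt) : ℤ := |z.re| + |z.im|

/-- ℓ∞ norm. -/
def linf (z : GaussianInt) : ℤ := max |z.re| |z.im|

/-- m(z) = min(|Re z|, |Im z|). -/
def mm (z : GaussianInt) : ℤ := min |z.re| |z.im|

/-- The algebraic norm. -/
def Nm (z : GaussianInt) : ℤ := z.re ^ 2 + z.im ^ 2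

/-- Graves' formula for the minimal Euclidean function φ on ℤ[i]. -/
def phi (z : GaussianInt) : ℕ :=
  let j := v2 z
  let n := sInf {n : ℕ | |z.re| ≤ 2 ^ j * (w n - 2) ∧ |z.im| ≤ 2 ^ j * (w n - 2)}
  if l1 z ≤ 2 ^ j * (w (n + 1) - 3) then n + 2 * j else n + 2 * j + 1

/-- Nearest integer, rounding halves down. -/
def nint (x : ℚ) : ℤ := if x - ⌊x⌋ ≤ 1 / 2 then ⌊x⌋ else ⌈x⌉

/-- Gauss quotient: coordinatewise nearest-integer rounding of a·conj(b)/Nm(b). -/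
def gq (a b : GaussianInt) : GaussianInt :=
  ⟨nint (((a.re * b.re + a.im * b.im : ℤ) : ℚ) / ((b.re ^ 2 + b.im ^ 2 : ℤ) : ℚ)),
   nint (((a.im * b.re - a.re * b.im : ℤ) : ℚ) / ((b.re ^ 2 + b.im ^ 2 : ℤ) : ℚ))⟩

/-- Gauss remainder. -/
def gr (a b : GaussianInt) : GaussianInt := a - gq a b * b

/-- The imaginary unit in ℤ[i]. -/
def Ii : GaussianInt := ⟨0, 1⟩

/-- The canonical unit u_z. -/
def uz (z : GaussianInt) : GaussianInt :=
  if |z.re| > |z.im| then (if 0 < z.re then 1 else -1)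
  else if |z.im| > |z.re| then (if 0 < z.im then -Ii else Ii)
  else if 0 < z.re then (if 0 < z.im then 1 else Ii)
  else (if 0 < z.im then -Ii else -1)

/-- s(z) = sgn(Im(u_z·z)). -/
def sfun (z : GaussianInt) : ℤ := Int.sign ((uz z * z).im)


/-!
For the Gauss remainder, `2 ℓ∞(r) ≤ ℓ₁(b)`, while Graves' formula gives `ℓ₁(b) ≤ w_{φ(b)+1} - 3`;
with `φ(b) = n` this is `2 w_{n-1} - 3`, so `ℓ∞(r) < w_{n-1}`. Read backwards, Graves' formula
turns `φ(r) ≥ n` into `ℓ∞(r) > w_{n-1} - 2D` or `ℓ₁(r) > w_n - 3D`, where `D = 2^{v₂(r)}`.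
Since `D` divides `Re r`, `Im r`, `w_{n-1}` and (as `D < w_{n-1}`) also `w_n - w_{n-1} = 2^⌊n/2⌋`,
these strict bounds round to `ℓ∞(r) = w_{n-1} - D` or `ℓ₁(r) ≥ w_n - 2D`. The other claims
follow from this dichotomy and `2 w_n ≤ 3 w_{n-1}`.
-/

lemma w_two_mul (k : ℕ) : w (2 * k) = 3 * 2 ^ k := by
  simp [w]

lemma w_two_mul_add_one (k : ℕ) : w (2 * k + 1) = 4 * 2 ^ k := by
  simp [w, Nat.add_mod, show (2 * k + 1) / 2 = k by omega]

lemma w_add_two (n : ℕ) : w (n + 2) = 2 * w n := by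
  rcases Nat.even_or_odd' n with ⟨k, rfl | rfl⟩
  · rw [show 2 * k + 2 = 2 * (k + 1) by ring, w_two_mul, w_two_mul]; ring
  · rw [show 2 * k + 1 + 2 = 2 * (k + 1) + 1 by ring, w_two_mul_add_one, w_two_mul_add_one]; ring

lemma w_add_two_mul (n j : ℕ) : w (n + 2 * j) = 2 ^ j * w n := by
  induction j with
  | zero => simp
  | succ j ih => rw [show n + 2 * (j + 1) = n + 2 * j + 2 by ring, w_add_two, ih]; ring

lemma w_add_one_sub_w (p : ℕ) : w (p + 1) - w p = 2 ^ ((p + 1) / 2) := by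
  rcases Nat.even_or_odd' p with ⟨k, rfl | rfl⟩
  · rw [w_two_mul_add_one, w_two_mul, show (2 * k + 1) / 2 = k by omega]; ring
  · rw [show 2 * k + 1 + 1 = 2 * (k + 1) by ring, w_two_mul, w_two_mul_add_one,
      Nat.mul_div_cancel_left _ two_pos]; ring

lemma w_strictMono : StrictMono w :=
  strictMono_nat_of_lt_succ fun p ↦ sub_pos.mp (w_add_one_sub_w p ▸ by positivity)

lemma two_mul_w_add_one_le (p : ℕ) : 2 * w (p + 1) ≤ 3 * w p := by
  rcases Nat.even_or_odd' p with ⟨k, rfl | rfl⟩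
  · rw [w_two_mul_add_one, w_two_mul]; linarith [pow_pos (two_pos : (0 : ℤ) < 2) k]
  · rw [show 2 * k + 1 + 1 = 2 * (k + 1) by ring, w_two_mul, w_two_mul_add_one, pow_succ]
    linarith

lemma w_le_of_lt_two_mul {p j : ℕ} (h : p < 2 * j) : w p ≤ 2 ^ (j + 1) := by
  obtain ⟨i, rfl⟩ : ∃ i, j = i + 1 := ⟨j - 1, by omega⟩
  calc w p ≤ w (2 * i + 1) := w_strictMono.monotone (by omega)
    _ = 2 ^ (i + 1 + 1) := by rw [w_two_mul_add_one, pow_succ, pow_succ]; ring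

lemma le_of_two_pow_dvd_w {p j : ℕ} (hdvd : (2 : ℤ) ^ j ∣ w p) (hlt : (2 : ℤ) ^ j < w p) :
    j ≤ (p + 1) / 2 := by
  rcases Nat.even_or_odd' p with ⟨k, rfl | rfl⟩
  · rw [w_two_mul] at hdvd
    have : (2 : ℤ) ^ j ∣ 2 ^ k :=
      (IsCoprime.pow_left (by norm_num : IsCoprime (2 : ℤ) 3)).dvd_of_dvd_mul_left hdvd
    have := (pow_dvd_pow_iff two_ne_zero (by decide)).mp this
    omega
  · rw [w_two_mul_add_one, show (4 : ℤ) * 2 ^ k = 2 ^ (k + 2) by ring] at hlt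
    have := (pow_lt_pow_iff_right₀ (by norm_num)).mp hlt
    omega

lemma abs_sub_nint_le (x : ℚ) : |x - nint x| ≤ 1 / 2 := by
  have hceil : (⌈x⌉ : ℚ) ≤ ⌊x⌋ + 1 := by exact_mod_cast Int.ceil_le_floor_add_one x
  unfold nint
  split_ifs with h <;> rw [abs_le] <;> constructor <;> linarith [Int.floor_le x, Int.le_ceil x]

lemma two_mul_abs_sub_nint_mul_le (s N : ℤ) (hN : 0 < N) :
    2 * |s - nint ((s : ℚ) / (N : ℚ)) * N| ≤ N := by
  have hNQ : (0 : ℚ) < N := by exact_mod_cast hN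
  have hsplit : (s : ℚ) - nint (s / N) * N = (s / N - nint (s / N)) * N := by field_simp
  have : 2 * |(s : ℚ) - nint (s / N) * N| ≤ N := by
    rw [hsplit, abs_mul, abs_of_pos hNQ]
    nlinarith [abs_sub_nint_le (s / N : ℚ)]
  exact_mod_cast this

lemma two_mul_abs_le_of_mul_eq {N e₁ e₂ x y t : ℤ} (hN : 0 < N) (h₁ : 2 * |e₁| ≤ N)
    (h₂ : 2 * |e₂| ≤ N) (ht : N * t = e₁ * x + e₂ * y) : 2 * |t| ≤ |x| + |y| := by
  refine le_of_mul_le_mul_left ?_ hN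
  calc N * (2 * |t|) = 2 * |e₁ * x + e₂ * y| := by rw [← ht, abs_mul, abs_of_pos hN]; ring
    _ ≤ 2 * |e₁| * |x| + 2 * |e₂| * |y| := by
        rw [mul_assoc, mul_assoc, ← abs_mul, ← abs_mul]; linarith [abs_add_le (e₁ * x) (e₂ * y)]
    _ ≤ N * (|x| + |y|) := by nlinarith [abs_nonneg x, abs_nonneg y]

lemma two_mul_linf_gr_le (a b : GaussianInt) (hb : b ≠ 0) : 2 * linf (gr a b) ≤ l1 b := by
  set N := b.re ^ 2 + b.im ^ 2
  have hN : 0 < N := by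
    have := GaussianInt.norm_pos.mpr hb
    rw [Zsqrtd.norm_def] at this
    linarith
  set s₁ := a.re * b.re + a.im * b.im
  set s₂ := a.im * b.re - a.re * b.im
  set e₁ := s₁ - nint ((s₁ : ℚ) / (N : ℚ)) * N
  set e₂ := s₂ - nint ((s₂ : ℚ) / (N : ℚ)) * N
  have h₁ := two_mul_abs_sub_nint_mul_le s₁ N hN
  have h₂ := two_mul_abs_sub_nint_mul_le s₂ N hN
  -- `e₁ + e₂ i = a b̄ - q N`, so `N r = (e₁ + e₂ i) b`.
  have hre : N * (gr a b).re = e₁ * b.re + e₂ * (-b.im) := by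
    simp only [gr, gq, Zsqrtd.re_sub, Zsqrtd.re_mul, e₁, e₂, s₁, s₂, N]; ring
  have him : N * (gr a b).im = e₁ * b.im + e₂ * b.re := by
    simp only [gr, gq, Zsqrtd.im_sub, Zsqrtd.im_mul, e₁, e₂, s₁, s₂, N]; ring
  have bre := two_mul_abs_le_of_mul_eq hN h₁ h₂ hre
  have bim := two_mul_abs_le_of_mul_eq hN h₁ h₂ him
  rw [abs_neg] at bre
  rw [linf, l1, mul_max_of_nonneg _ _ zero_le_two]
  exact max_le bre (by linarith)

lemma linf_le_l1 (z : GaussianInt) : linf z ≤ l1 z :=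
  max_le (by simp [l1]) (by simp [l1])

lemma l1_le_two_mul_linf (z : GaussianInt) : l1 z ≤ 2 * linf z := by
  rw [l1, linf]; linarith [le_max_left |z.re| |z.im|, le_max_right |z.re| |z.im|]

lemma mm_add_linf (z : GaussianInt) : mm z + linf z = l1 z :=
  min_add_max _ _

lemma linf_pos {z : GaussianInt} (hz : z ≠ 0) : 0 < linf z := by
  by_contra! h
  have hre : z.re = 0 := abs_nonpos_iff.mp ((le_max_left _ _).trans h)
  have him : z.im = 0 := abs_nonpos_iff.mp ((le_max_right _ _).trans h)
  exact hz (Zsqrtd.ext hre him)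

lemma pow_v2_dvd_gcd (z : GaussianInt) : (2 : ℤ) ^ v2 z ∣ (Int.gcd z.re z.im : ℤ) := by
  exact_mod_cast Int.natCast_dvd_natCast.mpr (pow_padicValNat_dvd (p := 2))

lemma pow_v2_dvd_re (z : GaussianInt) : (2 : ℤ) ^ v2 z ∣ z.re :=
  (pow_v2_dvd_gcd z).trans (Int.gcd_dvd_left _ _)

lemma pow_v2_dvd_im (z : GaussianInt) : (2 : ℤ) ^ v2 z ∣ z.im :=
  (pow_v2_dvd_gcd z).trans (Int.gcd_dvd_right _ _)

lemma pow_v2_dvd_l1 (z : GaussianInt) : (2 : ℤ) ^ v2 z ∣ l1 z :=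
  dvd_add ((dvd_abs _ _).mpr (pow_v2_dvd_re z)) ((dvd_abs _ _).mpr (pow_v2_dvd_im z))

lemma pow_v2_dvd_linf (z : GaussianInt) : (2 : ℤ) ^ v2 z ∣ linf z := by
  rcases max_choice |z.re| |z.im| with h | h <;> rw [linf, h, dvd_abs]
  exacts [pow_v2_dvd_re z, pow_v2_dvd_im z]

def phiIndex (z : GaussianInt) : ℕ :=
  sInf {n : ℕ | |z.re| ≤ 2 ^ v2 z * (w n - 2) ∧ |z.im| ≤ 2 ^ v2 z * (w n - 2)}

lemma phi_eq (z : GaussianInt) :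
    phi z = if l1 z ≤ 2 ^ v2 z * (w (phiIndex z + 1) - 3) then phiIndex z + 2 * v2 z
      else phiIndex z + 2 * v2 z + 1 :=
  rfl

lemma phiIndex_le {z : GaussianInt} {k : ℕ} (h : linf z ≤ 2 ^ v2 z * (w k - 2)) :
    phiIndex z ≤ k :=
  Nat.sInf_le (max_le_iff.mp h)

lemma linf_le_phiIndex (z : GaussianInt) : linf z ≤ 2 ^ v2 z * (w (phiIndex z) - 2) := by
  set N := z.re.natAbs + z.im.natAbs
  have hN : (N : ℤ) < 2 ^ N := by exact_mod_cast Nat.lt_two_pow_self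
  have hw : (N : ℤ) ≤ 2 ^ v2 z * (w (2 * N) - 2) := by
    rw [w_two_mul]
    nlinarith [one_le_pow₀ (M₀ := ℤ) (n := v2 z) one_le_two]
  have hne : {n : ℕ | |z.re| ≤ 2 ^ v2 z * (w n - 2) ∧ |z.im| ≤ 2 ^ v2 z * (w n - 2)}.Nonempty :=
    ⟨2 * N, by rw [Int.abs_eq_natAbs]; omega, by rw [Int.abs_eq_natAbs]; omega⟩
  exact max_le_iff.mpr (Nat.sInf_mem hne)

lemma phi_le {z : GaussianInt} {k : ℕ} (hlinf : linf z ≤ 2 ^ v2 z * (w k - 2))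
    (hl1 : l1 z ≤ 2 ^ v2 z * (w (k + 1) - 3)) : phi z ≤ k + 2 * v2 z := by
  have hk := phiIndex_le hlinf
  rw [phi_eq]
  split_ifs with h
  · omega
  · have : phiIndex z ≠ k := by rintro rfl; exact h hl1
    omega

lemma l1_le_w_phi_add_one (z : GaussianInt) : l1 z ≤ w (phi z + 1) - 3 := by
  have hD : (1 : ℤ) ≤ 2 ^ v2 z := one_le_pow₀ one_le_two
  have hlinf := linf_le_phiIndex z
  rw [phi_eq]
  split_ifs with h
  · calc l1 z ≤ 2 ^ v2 z * (w (phiIndex z + 1) - 3) := h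
      _ = w (phiIndex z + 2 * v2 z + 1) - 3 * 2 ^ v2 z := by
        rw [add_right_comm, w_add_two_mul]; ring
      _ ≤ _ := by linarith
  · calc l1 z ≤ 2 * linf z := l1_le_two_mul_linf z
      _ ≤ 2 * (2 ^ v2 z * (w (phiIndex z) - 2)) := by linarith
      _ = w (phiIndex z + 2 * v2 z + 1 + 1) - 4 * 2 ^ v2 z := by
        rw [add_assoc _ 1 1, w_add_two, w_add_two_mul]; ring
      _ ≤ _ := by linarith

lemma lt_linf_or_lt_l1_of_lt_phi {z : GaussianInt} {p : ℕ} (hz : z ≠ 0) (hp : p < phi z) :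
    w p - 2 * 2 ^ v2 z < linf z ∨ w (p + 1) - 3 * 2 ^ v2 z < l1 z := by
  by_contra! h
  obtain ⟨hlinf, hl1⟩ := h
  rcases lt_or_ge p (2 * v2 z) with hlt | hge
  · have := w_le_of_lt_two_mul hlt
    rw [pow_succ] at this
    linarith [linf_pos hz]
  · obtain ⟨k, rfl⟩ : ∃ k, p = k + 2 * v2 z := ⟨p - 2 * v2 z, by omega⟩
    rw [w_add_two_mul] at hlinf
    rw [add_right_comm, w_add_two_mul] at hl1
    have := phi_le (k := k) (by linarith) (by linarith)
    omega

lemma linf_eq_or_le_l1_of_lt_phi {z : GaussianInt} {p : ℕ} (hz : z ≠ 0) (hp : p < phi z)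
    (hdvd : (2 : ℤ) ^ v2 z ∣ w p) (hlt : linf z < w p) :
    linf z = w p - 2 ^ v2 z ∨
      (linf z ≤ w p - 2 * 2 ^ v2 z ∧ w (p + 1) - 2 * 2 ^ v2 z ≤ l1 z) := by
  set D : ℤ := 2 ^ v2 z
  have hD_linf : D ∣ linf z := pow_v2_dvd_linf z
  have hlinf_le : linf z ≤ w p - D := by
    linarith [Int.le_of_dvd (by linarith) (dvd_sub hdvd hD_linf)]
  have hD_w : D ∣ w (p + 1) := by
    have hj := le_of_two_pow_dvd_w hdvd (lt_of_le_of_lt (Int.le_of_dvd (linf_pos hz) hD_linf) hlt)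
    have hD_δ : D ∣ w (p + 1) - w p := w_add_one_sub_w p ▸ pow_dvd_pow 2 hj
    simpa using dvd_add hD_δ hdvd
  rcases hlinf_le.eq_or_lt with heq | hlt'
  · exact Or.inl heq
  · have hle := Int.le_of_dvd (by linarith) (dvd_sub (dvd_sub hdvd dvd_rfl) hD_linf)
    refine Or.inr ⟨by linarith, ?_⟩
    rcases lt_linf_or_lt_l1_of_lt_phi hz hp with h | h
    · linarith [Int.le_of_dvd (by linarith) (dvd_sub hD_linf (dvd_sub hdvd (dvd_mul_left D 2)))]
    · linarith [Int.le_of_dvd (by linarith)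
        (dvd_sub (pow_v2_dvd_l1 z) (dvd_sub hD_w (dvd_mul_left D 3)))]

theorem stmt14_general (a b r : GaussianInt) (n : ℕ) (hb : b ≠ 0) (hr : r = gr a b)
    (hr0 : r ≠ 0) (hphi : phi r ≥ phi b) (hn : phi b = n) (hn1 : 1 ≤ n)
    (hdvd : (2 ^ (v2 r) : ℤ) ∣ w (n - 1)) :
    (linf r = w (n - 1) - 2 ^ (v2 r) ∨ l1 r ≥ w n - 2 ^ (v2 r + 1)) ∧
    linf r ≥ w n - w (n - 1) ∧ l1 r ≥ w (n - 1) - 2 ^ (v2 r) ∧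
    (linf r ≠ w (n - 1) - 2 ^ (v2 r) → mm r ≥ w n - w (n - 1)) := by
  obtain ⟨p, rfl⟩ : ∃ p, n = p + 1 := ⟨n - 1, by omega⟩
  rw [Nat.add_sub_cancel] at hdvd ⊢
  rw [pow_succ']
  set D : ℤ := 2 ^ v2 r
  have hD_le : D ≤ linf r := Int.le_of_dvd (linf_pos hr0) (pow_v2_dvd_linf r)
  have hlinf_lt : linf r < w p := by
    have hl1b := l1_le_w_phi_add_one b
    rw [hn, w_add_two] at hl1b
    linarith [hr ▸ two_mul_linf_gr_le a b hb]
  have key := linf_eq_or_le_l1_of_lt_phi hr0 (by omega) hdvd hlinf_lt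
  have hj := le_of_two_pow_dvd_w hdvd (by linarith)
  have hδ := w_add_one_sub_w p
  have hD_le_δ : D ≤ w (p + 1) - w p := hδ ▸ pow_le_pow_right₀ one_le_two hj
  have := two_mul_w_add_one_le p
  have := l1_le_two_mul_linf r
  have := linf_le_l1 r
  have := mm_add_linf r
  refine ⟨key.imp_right (·.2), ?_, by rcases key with h | h <;> linarith, fun hne ↦ ?_⟩
  · rcases Nat.lt_or_eq_of_le hj with hlt | heq
    · have : 2 * D ≤ w (p + 1) - w p := by
        rw [hδ, ← pow_succ']; exact pow_le_pow_right₀ one_le_two hlt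
      rcases key with h | h <;> linarith
    · linarith [show D = w (p + 1) - w p by rw [hδ, ← heq]]
  · rcases key with h | h
    · exact absurd h hne
    · linarith [h.1]

theorem stmt14 (a b r : GaussianInt) (n : ℕ) (ha : a ≠ 0) (hb : b ≠ 0) (hr : r = gr a b)
    (hr0 : r ≠ 0) (hphi : phi r ≥ phi b) (hn : phi b = n) (hn1 : 1 ≤ n)
    (hdvd : (2 ^ (v2 r) : ℤ) ∣ w (n - 1)) :
    (linf r = w (n - 1) - 2 ^ (v2 r) ∨ l1 r ≥ w n - 2 ^ (v2 r + 1)) ∧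
    linf r ≥ w n - w (n - 1) ∧ l1 r ≥ w (n - 1) - 2 ^ (v2 r) ∧
    (linf r ≠ w (n - 1) - 2 ^ (v2 r) → mm r ≥ w n - w (n - 1)) :=
  stmt14_general a b r n hb hr hr0 hphi hn hn1 hdvd
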